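/- For every ε > 0, δ ∈ (0,1), T > 0, initial coefficient vector z⁰ ∈ ℝ^N, and measurable essentially bounded control u : [0,T] → ℝ^{n_c}, there exists m₀ ∈ ℕ such that for every m ≥ m₀: if z : [0,T] → ℝ^N is the continuous solution of z(t) = z⁰ + ∫₀ᵗ L_V^u(s) z(s) ds, and if for each ω in the event on which all empirical mass matrices are invertible z̃(·,ω) : [0,T] → ℝ^N is a continuous solution of z̃(t,ω) = z⁰ + ∫₀ᵗ L̃_m^u(s,ω) z̃(s,ω) ds, then for every t ∈ [0,T] one has ℙ(‖z(t) − z̃(t,·)‖₂ ≤ ε) ≥ 1 − δ. -/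

import Mathlib

/-!
By the strong law of large numbers the empirical mass and stiffness matrices converge almost
surely, and since the mass matrix `C` is invertible, so do the empirical generators
`L̃^{F_i}_m = (C̃_m)⁻¹ Ã^{F_i}_m → L_V^{F_i}`. Almost sure convergence implies convergence in
probability: for large `m`, with probability at least `1 - δ`, all empirical mass matrices are
invertible and every `L̃^{F_i}_m` lies within `η` of `L_V^{F_i}`. On that event the two
control-affine generators differ by `O(η)` along the whole control, and Grönwall's inequality,
applied first to the exact trajectory (bounding it by `‖z⁰‖ e^{KT}`, independently of `m`) and then
to the difference of the trajectories, gives `‖z(t) - z̃(t)‖ ≤ ε` once `η` is small.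
-/

open MeasureTheory ProbabilityTheory Set Filter Topology Real

theorem le_mul_exp_of_le_add_mul_integral {T c K : ℝ} {w : ℝ → ℝ}
    (hw : ContinuousOn w (Icc 0 T)) (hK : 0 ≤ K)
    (h : ∀ t ∈ Icc 0 T, w t ≤ c + K * ∫ s in (0 : ℝ)..t, w s) :
    ∀ t ∈ Icc 0 T, w t ≤ c * exp (K * t) := by
  intro t ht
  have hT : (0 : ℝ) ≤ T := ht.1.trans ht.2
  -- a continuous extension of `w` to `ℝ`, whose primitive is differentiable everywhere
  set w' : ℝ → ℝ := fun s => w (projIcc 0 T hT s)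
  have hw' : Continuous w' :=
    hw.comp_continuous (continuous_subtype_val.comp continuous_projIcc) fun s =>
      (projIcc 0 T hT s).2
  have hw'w : ∀ s ∈ Icc 0 T, w' s = w s := fun s hs => by simp [w', projIcc_of_mem hT hs]
  set φ : ℝ → ℝ := fun t => c + K * ∫ s in (0 : ℝ)..t, w' s
  have hφ : ∀ x, HasDerivAt φ (K * w' x) x := fun x =>
    ((hw'.integral_hasStrictDerivAt 0 x).hasDerivAt.const_mul K).const_add c
  have hwφ : ∀ x ∈ Icc 0 T, w x ≤ φ x := fun x hx => by
    refine (h x hx).trans_eq ?_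
    simp only [φ]
    congr 2
    refine intervalIntegral.integral_congr fun s hs => (hw'w s ?_).symm
    rw [uIcc_of_le hx.1] at hs
    exact ⟨hs.1, hs.2.trans hx.2⟩
  have hgron := le_gronwallBound_of_liminf_deriv_right_le (f := φ) (ε := 0) (δ := c) (K := K)
    (continuous_iff_continuousAt.2 fun x => (hφ x).continuousAt).continuousOn
    (fun x _ r hr => (hφ x).hasDerivWithinAt.liminf_right_slope_le hr) (by simp [φ])
    (fun x hx => by
      rw [add_zero, hw'w x (Ico_subset_Icc_self hx)]
      exact mul_le_mul_of_nonneg_left (hwφ x (Ico_subset_Icc_self hx)) hK) t ht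
  rw [sub_zero, gronwallBound_ε0] at hgron
  exact (hwφ t ht).trans hgron

section IntegralEquation

variable {E : Type*} [NormedAddCommGroup E] [NormedSpace ℝ E] {T : ℝ}

theorem norm_le_of_eq_add_integral {K a : ℝ} {y h : ℝ → E} {y₀ : E} (hK : 0 ≤ K) (ha : 0 ≤ a)
    (hy : ContinuousOn y (Icc 0 T)) (hyeq : ∀ t ∈ Icc 0 T, y t = y₀ + ∫ s in (0 : ℝ)..t, h s)
    (hh : ∀ᵐ s ∂volume.restrict (Icc 0 T), ‖h s‖ ≤ a + K * ‖y s‖) :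
    ∀ t ∈ Icc 0 T, ‖y t‖ ≤ (‖y₀‖ + a * T) * exp (K * t) := by
  refine le_mul_exp_of_le_add_mul_integral hy.norm hK fun t ht => ?_
  have hsub : Icc 0 t ⊆ Icc 0 T := Icc_subset_Icc_right ht.2
  have hyi : IntervalIntegrable (fun s => ‖y s‖) volume 0 t :=
    (hy.mono hsub).norm.intervalIntegrable_of_Icc ht.1
  have hint : ‖∫ s in (0 : ℝ)..t, h s‖ ≤ ∫ s in (0 : ℝ)..t, (a + K * ‖y s‖) := by
    refine intervalIntegral.norm_integral_le_of_norm_le ht.1 ?_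
      (intervalIntegrable_const.add (hyi.const_mul K))
    filter_upwards [(ae_restrict_iff' measurableSet_Icc).1 hh] with s hs hst
    exact hs (hsub (Ioc_subset_Icc_self hst))
  rw [intervalIntegral.integral_add intervalIntegrable_const (hyi.const_mul K),
    intervalIntegral.integral_const, intervalIntegral.integral_const_mul, sub_zero,
    smul_eq_mul] at hint
  calc ‖y t‖ ≤ ‖y₀‖ + ‖∫ s in (0 : ℝ)..t, h s‖ := by rw [hyeq t ht]; exact norm_add_le _ _
    _ ≤ ‖y₀‖ + a * T + K * ∫ s in (0 : ℝ)..t, ‖y s‖ := by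
      nlinarith [mul_le_mul_of_nonneg_left ht.2 ha]

theorem intervalIntegrable_apply_of_norm_le {F : Type*} [NormedAddCommGroup F] [NormedSpace ℝ F]
    {A : ℝ → E →L[ℝ] F} {y : ℝ → E} {K t : ℝ}
    (hA : AEStronglyMeasurable A (volume.restrict (Icc 0 T)))
    (hAK : ∀ᵐ s ∂volume.restrict (Icc 0 T), ‖A s‖ ≤ K) (hy : ContinuousOn y (Icc 0 T))
    (ht : t ∈ Icc 0 T) :
    IntervalIntegrable (fun s => A s (y s)) volume 0 t := by
  obtain ⟨M, hM⟩ := isCompact_Icc.exists_bound_of_continuousOn hy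
  have hint : IntegrableOn (fun s => A s (y s)) (Icc 0 T) := by
    refine Integrable.mono' (integrable_const (K * M))
      (isBoundedBilinearMap_apply.continuous.comp_aestronglyMeasurable
        (hA.prodMk (hy.aestronglyMeasurable measurableSet_Icc))) ?_
    filter_upwards [hAK, ae_restrict_mem measurableSet_Icc] with s hs hsT
    exact ((A s).le_opNorm _).trans
      (mul_le_mul hs (hM s hsT) (norm_nonneg _) ((norm_nonneg _).trans hs))
  exact (hint.mono_set (uIcc_subset_Icc (left_mem_Icc.2 (ht.1.trans ht.2)) ht)).intervalIntegrable

theorem norm_sub_le_of_eq_add_integral {A B : ℝ → E →L[ℝ] E} {K η : ℝ} {z₀ : E} {z z' : ℝ → E}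
    (hK : 0 ≤ K) (hη : 0 ≤ η)
    (hAm : AEStronglyMeasurable A (volume.restrict (Icc 0 T)))
    (hBm : AEStronglyMeasurable B (volume.restrict (Icc 0 T)))
    (hAK : ∀ᵐ s ∂volume.restrict (Icc 0 T), ‖A s‖ ≤ K)
    (hAB : ∀ᵐ s ∂volume.restrict (Icc 0 T), ‖A s - B s‖ ≤ η)
    (hz : ContinuousOn z (Icc 0 T)) (hzeq : ∀ t ∈ Icc 0 T, z t = z₀ + ∫ s in (0 : ℝ)..t, A s (z s))
    (hz' : ContinuousOn z' (Icc 0 T))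
    (hz'eq : ∀ t ∈ Icc 0 T, z' t = z₀ + ∫ s in (0 : ℝ)..t, B s (z' s)) :
    ∀ t ∈ Icc 0 T, ‖z t - z' t‖ ≤ η * (‖z₀‖ * exp (K * T)) * T * exp ((K + η) * T) := by
  have hzM : ∀ s ∈ Icc 0 T, ‖z s‖ ≤ ‖z₀‖ * exp (K * T) := fun s hs => by
    have h := norm_le_of_eq_add_integral hK le_rfl hz hzeq
      (hAK.mono fun s hs => by rw [zero_add]; exact (A s).le_of_opNorm_le hs _) s hs
    rw [zero_mul, add_zero] at h
    exact h.trans (by gcongr; exact hs.2)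
  have hBK : ∀ᵐ s ∂volume.restrict (Icc 0 T), ‖B s‖ ≤ K + η := by
    filter_upwards [hAK, hAB] with s hA hAB
    calc ‖B s‖ = ‖A s - (A s - B s)‖ := by rw [sub_sub_cancel]
      _ ≤ K + η := (norm_sub_le _ _).trans (add_le_add hA hAB)
  have hdiff : ∀ t ∈ Icc 0 T, z t - z' t = 0 + ∫ s in (0 : ℝ)..t, (A s (z s) - B s (z' s)) := by
    intro t ht
    rw [zero_add, intervalIntegral.integral_sub
      (intervalIntegrable_apply_of_norm_le hAm hAK hz ht)
      (intervalIntegrable_apply_of_norm_le hBm hBK hz' ht), hzeq t ht, hz'eq t ht]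
    abel
  have hbound : ∀ᵐ s ∂volume.restrict (Icc 0 T),
      ‖A s (z s) - B s (z' s)‖ ≤ η * (‖z₀‖ * exp (K * T)) + (K + η) * ‖z s - z' s‖ := by
    filter_upwards [hAB, hBK, ae_restrict_mem measurableSet_Icc] with s hAB hB hs
    calc ‖A s (z s) - B s (z' s)‖ = ‖(A s - B s) (z s) + B s (z s - z' s)‖ := by
          rw [sub_apply, map_sub, sub_add_sub_cancel]
      _ ≤ η * (‖z₀‖ * exp (K * T)) + (K + η) * ‖z s - z' s‖ :=
          (norm_add_le _ _).trans (add_le_add ((A s - B s).le_of_opNorm_le_of_le hAB (hzM s hs))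
            ((B s).le_of_opNorm_le hB _))
  intro t ht
  have h := norm_le_of_eq_add_integral (add_nonneg hK hη) (mul_nonneg hη (by positivity))
    (hz.sub hz') hdiff hbound t ht
  rw [norm_zero, zero_add] at h
  exact h.trans (mul_le_mul_of_nonneg_left (exp_le_exp.2 (mul_le_mul_of_nonneg_left ht.2
    (add_nonneg hK hη))) (mul_nonneg (mul_nonneg hη (by positivity)) (ht.1.trans ht.2)))

end IntegralEquation

section ControlledGenerator

variable {R M : Type*} {n : ℕ}

def controlledGenerator [Ring R] [AddCommGroup M] [Module R M] (G : Fin (n + 1) → M)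
    (v : Fin n → R) : M :=
  G 0 + ∑ i, v i • (G i.succ - G 0)

theorem map_controlledGenerator [Ring R] [AddCommGroup M] [Module R M] {N F : Type*}
    [AddCommGroup N] [Module R N] [FunLike F M N] [LinearMapClass F R M N] (f : F)
    (G : Fin (n + 1) → M) (v : Fin n → R) :
    f (controlledGenerator G v) = controlledGenerator (fun i => f (G i)) v := by
  simp [controlledGenerator, map_sum, map_smul]

theorem controlledGenerator_sub [Ring R] [AddCommGroup M] [Module R M] (G H : Fin (n + 1) → M)
    (v : Fin n → R) :
    controlledGenerator G v - controlledGenerator H v = controlledGenerator (G - H) v := by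
  simp only [controlledGenerator, Pi.sub_apply, smul_sub, Finset.sum_sub_distrib]
  abel

theorem norm_controlledGenerator_le [SeminormedAddCommGroup M] [NormedSpace ℝ M]
    {G : Fin (n + 1) → M} {v : Fin n → ℝ} {c K : ℝ} (hG : ∀ i, ‖G i‖ ≤ c) (hv : ∀ i, |v i| ≤ K) :
    ‖controlledGenerator G v‖ ≤ (1 + 2 * n * K) * c := by
  have hterm : ∀ i, ‖v i • (G i.succ - G 0)‖ ≤ K * (2 * c) := fun i => by
    rw [norm_smul, Real.norm_eq_abs]
    exact mul_le_mul (hv i) ((norm_sub_le _ _).trans (by linarith [hG i.succ, hG 0]))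
      (norm_nonneg _) ((abs_nonneg _).trans (hv i))
  calc ‖controlledGenerator G v‖ ≤ ‖G 0‖ + ∑ i, ‖v i • (G i.succ - G 0)‖ :=
        (norm_add_le _ _).trans (add_le_add_right (norm_sum_le _ _) _)
    _ ≤ c + ∑ _i : Fin n, K * (2 * c) := add_le_add (hG 0) (Finset.sum_le_sum fun i _ => hterm i)
    _ = (1 + 2 * n * K) * c := by
      simp only [Finset.sum_const, Finset.card_univ, Fintype.card_fin, nsmul_eq_mul]
      ring

theorem continuous_controlledGenerator [Ring R] [TopologicalSpace R] [AddCommGroup M]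
    [Module R M] [TopologicalSpace M] [IsTopologicalAddGroup M] [ContinuousSMul R M]
    (G : Fin (n + 1) → M) : Continuous (controlledGenerator (R := R) G) := by
  unfold controlledGenerator
  fun_prop

end ControlledGenerator

theorem exists_pos_forall_norm_sub_le_of_controlledGenerator {E : Type*} [NormedAddCommGroup E]
    [NormedSpace ℝ E] {n : ℕ} {T ε : ℝ} (hε : 0 < ε) {u : ℝ → Fin n → ℝ}
    (hu : AEStronglyMeasurable u (volume.restrict (Icc 0 T)))
    (hubdd : ∃ K, ∀ᵐ s ∂volume.restrict (Icc 0 T), ∀ i, |u s i| ≤ K)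
    (G : Fin (n + 1) → E →L[ℝ] E) (z₀ : E) :
    ∃ η > 0, ∀ H : Fin (n + 1) → E →L[ℝ] E, (∀ i, ‖H i - G i‖ < η) →
      ∀ {A B : ℝ → E →L[ℝ] E} {z z' : ℝ → E},
      (∀ s, A s = controlledGenerator G (u s)) → (∀ s, B s = controlledGenerator H (u s)) →
      ContinuousOn z (Icc 0 T) → (∀ t ∈ Icc 0 T, z t = z₀ + ∫ s in (0 : ℝ)..t, A s (z s)) →
      ContinuousOn z' (Icc 0 T) → (∀ t ∈ Icc 0 T, z' t = z₀ + ∫ s in (0 : ℝ)..t, B s (z' s)) →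
      ∀ t ∈ Icc 0 T, ‖z t - z' t‖ ≤ ε := by
  obtain ⟨K, hK⟩ := hubdd
  have hK₀ : ∀ᵐ s ∂volume.restrict (Icc 0 T), ∀ i, |u s i| ≤ max K 0 :=
    hK.mono fun s hs i => (hs i).trans (le_max_left _ _)
  set κ : ℝ := 1 + 2 * n * max K 0
  have hκ : 0 ≤ κ := by positivity
  set c : ℝ := ∑ i, ‖G i‖
  have hc : ∀ i, ‖G i‖ ≤ c := fun i =>
    Finset.single_le_sum (f := fun i => ‖G i‖) (fun i _ => norm_nonneg _) (Finset.mem_univ i)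
  obtain ⟨η, hηε, hη⟩ : ∃ η, κ * η * (‖z₀‖ * exp (κ * c * T)) * T * exp ((κ * c + κ * η) * T) < ε
      ∧ 0 < η := by
    have hcont : Continuous fun η =>
        κ * η * (‖z₀‖ * exp (κ * c * T)) * T * exp ((κ * c + κ * η) * T) := by fun_prop
    refine (((hcont.tendsto 0).mono_left nhdsWithin_le_nhds).eventually
      (gt_mem_nhds (by simpa using hε))).and (self_mem_nhdsWithin : Ioi (0 : ℝ) ∈ 𝓝[>] 0)
      |>.exists
  refine ⟨η, hη, fun H hH A B z z' hA hB hz hzeq hz' hz'eq t ht => ?_⟩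
  have hmeas : ∀ {G' : Fin (n + 1) → E →L[ℝ] E} {A' : ℝ → E →L[ℝ] E},
      (∀ s, A' s = controlledGenerator G' (u s)) →
      AEStronglyMeasurable A' (volume.restrict (Icc 0 T)) := fun hA' =>
    funext hA' ▸ (continuous_controlledGenerator _).comp_aestronglyMeasurable hu
  refine (norm_sub_le_of_eq_add_integral (mul_nonneg hκ (hc 0 |> (norm_nonneg _).trans))
    (mul_nonneg hκ hη.le) (hmeas hA) (hmeas hB) ?_ ?_ hz hzeq hz' hz'eq t ht).trans hηε.le
  · filter_upwards [hK₀] with s hs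
    rw [hA]
    exact norm_controlledGenerator_le hc hs
  · filter_upwards [hK₀] with s hs
    rw [hA, hB, controlledGenerator_sub]
    exact norm_controlledGenerator_le
      (fun i => by rw [Pi.sub_apply, norm_sub_rev]; exact (hH i).le) hs

namespace Matrix

/- Mathlib puts no σ-algebra on matrices; we use the product one, which is the Borel σ-algebra. -/
instance instMeasurableSpace {m n α : Type*} [MeasurableSpace α] :
    MeasurableSpace (Matrix m n α) :=
  MeasurableSpace.pi

instance instSecondCountableTopology {m n α : Type*} [Countable m] [Countable n]
    [TopologicalSpace α] [SecondCountableTopology α] :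
    SecondCountableTopology (Matrix m n α) :=
  inferInstanceAs (SecondCountableTopology (m → n → α))

instance instBorelSpace {m n α : Type*} [Countable m] [Countable n] [TopologicalSpace α]
    [MeasurableSpace α] [SecondCountableTopology α] [BorelSpace α] :
    BorelSpace (Matrix m n α) :=
  Pi.borelSpace

instance instMeasurableInv {n : Type*} [Fintype n] [DecidableEq n] :
    MeasurableInv (Matrix n n ℝ) where
  measurable_inv := by
    have h : (Inv.inv : Matrix n n ℝ → Matrix n n ℝ) = fun A => A.det⁻¹ • A.adjugate :=
      funext fun A => by rw [inv_def, Ring.inverse_eq_inv']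
    rw [h]
    exact (continuous_id.matrix_det.measurable.inv).smul continuous_id.matrix_adjugate.measurable

theorem continuous_toEuclideanCLM {n : Type*} [Fintype n] [DecidableEq n] :
    Continuous (toEuclideanCLM (𝕜 := ℝ) (n := n)) :=
  (toEuclideanCLM (𝕜 := ℝ) (n := n)).toAlgEquiv.toLinearEquiv.toLinearMap
    |>.continuous_of_finiteDimensional

end Matrix

theorem Filter.Tendsto.matrix_inv_mul {α n : Type*} [Fintype n] [DecidableEq n] {l : Filter α}
    {C A : Matrix n n ℝ} {C' A' : α → Matrix n n ℝ} (hC : Tendsto C' l (𝓝 C))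
    (hA : Tendsto A' l (𝓝 A)) (hCdet : IsUnit C.det) :
    Tendsto (fun x => (C' x)⁻¹ * A' x) l (𝓝 (C⁻¹ * A)) := by
  have hinv : ContinuousAt Inv.inv C := continuousAt_matrix_inv C <| by
    rw [Ring.inverse_eq_inv']; exact continuousAt_inv₀ hCdet.ne_zero
  exact (hinv.tendsto.comp hC).mul hA

section SampleMean

variable {Ω E : Type*} [MeasurableSpace Ω] [MeasurableSpace E] {P : Measure Ω} {μ : Measure E}
  {X : ℕ → Ω → E}

theorem ae_tendsto_sampleMean (hX : ∀ r, Measurable (X r)) (hindep : iIndepFun X P)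
    (hlaw : ∀ r, P.map (X r) = μ) {φ : E → ℝ} (hφ : Measurable φ) (hφi : Integrable φ μ) :
    ∀ᵐ ω ∂P, Tendsto (fun m : ℕ => (1 / m : ℝ) * ∑ r ∈ Finset.range m, φ (X r ω)) atTop
      (𝓝 (∫ y, φ y ∂μ)) := by
  have hident : ∀ r, IdentDistrib (X r) (X 0) P P := fun r =>
    ⟨(hX r).aemeasurable, (hX 0).aemeasurable, by rw [hlaw, hlaw]⟩
  have hint : Integrable (fun ω => φ (X 0 ω)) P :=
    (integrable_map_measure hφ.aestronglyMeasurable (hX 0).aemeasurable).1 (hlaw 0 ▸ hφi)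
  have hmean : ∫ ω, φ (X 0 ω) ∂P = ∫ y, φ y ∂μ := by
    rw [← hlaw 0, integral_map (hX 0).aemeasurable hφ.aestronglyMeasurable]
  have h := strong_law_ae_real (fun r ω => φ (X r ω)) hint
    (fun i j hij => (hindep.indepFun hij).comp hφ hφ) fun r => (hident r).comp hφ
  filter_upwards [h] with ω hω
  simpa only [hmean, one_div, inv_mul_eq_div] using hω

variable {ι κ : Type*} {φ : ι → κ → E → ℝ} {M : ℕ → Ω → Matrix ι κ ℝ}

theorem measurable_matrix_sampleMean (hX : ∀ r, Measurable (X r)) (hφ : ∀ k l, Measurable (φ k l))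
    (hM : ∀ m ω k l, M m ω k l = (1 / m : ℝ) * ∑ r ∈ Finset.range m, φ k l (X r ω)) (m : ℕ) :
    Measurable (M m) := by
  refine measurable_pi_iff.2 fun k => measurable_pi_iff.2 fun l => ?_
  simp_rw [hM]
  exact measurable_const.mul (Finset.measurable_sum _ fun r _ => (hφ k l).comp (hX r))

theorem ae_tendsto_matrix_sampleMean [Countable ι] [Countable κ] (hX : ∀ r, Measurable (X r))
    (hindep : iIndepFun X P) (hlaw : ∀ r, P.map (X r) = μ) (hφ : ∀ k l, Measurable (φ k l))
    (hφi : ∀ k l, Integrable (φ k l) μ)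
    (hM : ∀ m ω k l, M m ω k l = (1 / m : ℝ) * ∑ r ∈ Finset.range m, φ k l (X r ω))
    {L : Matrix ι κ ℝ} (hL : ∀ k l, L k l = ∫ y, φ k l y ∂μ) :
    ∀ᵐ ω ∂P, Tendsto (fun m => M m ω) atTop (𝓝 L) := by
  have h : ∀ᵐ ω ∂P, ∀ k l, Tendsto (fun m => M m ω k l) atTop (𝓝 (L k l)) :=
    ae_all_iff.2 fun k => ae_all_iff.2 fun l => by
      simpa only [hM, hL] using ae_tendsto_sampleMean hX hindep hlaw (hφ k l) (hφi k l)
  filter_upwards [h] with ω hω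
  exact tendsto_pi_nhds.2 fun k => tendsto_pi_nhds.2 (hω k)

end SampleMean

theorem exists_forall_ge_one_sub_le_measureReal_preimage {Ω S : Type*} [MeasurableSpace Ω]
    {P : Measure Ω} [IsProbabilityMeasure P] [TopologicalSpace S] [MeasurableSpace S]
    [OpensMeasurableSpace S] {Y : ℕ → Ω → S} {y : S} (hY : ∀ m, Measurable (Y m))
    (hlim : ∀ᵐ ω ∂P, Tendsto (fun m => Y m ω) atTop (𝓝 y)) {U : Set S} (hU : IsOpen U)
    (hyU : y ∈ U) {δ : ℝ} (hδ : 0 < δ) :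
    ∃ m₀, ∀ m ≥ m₀, 1 - δ ≤ P.real (Y m ⁻¹' U) := by
  have h := tendsto_measure_of_ae_tendsto_indicator_of_isFiniteMeasure atTop MeasurableSet.univ
    (fun m => hY m hU.measurableSet) (hlim.mono fun ω hω => by
      simpa using hω (hU.mem_nhds hyU))
  rw [measure_univ] at h
  obtain ⟨m₀, hm₀⟩ := eventually_atTop.1 <|
    ((ENNReal.tendsto_toReal ENNReal.one_ne_top).comp h).eventually
      (lt_mem_nhds (show 1 - δ < (1 : ENNReal).toReal by rw [ENNReal.toReal_one]; linarith))
  exact ⟨m₀, fun m hm => (hm₀ m hm).le⟩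

section EmpiricalGenerator

variable {Ω E ι : Type*} [MeasurableSpace Ω] [MeasurableSpace E] [Fintype ι] [DecidableEq ι]
  {X : ℕ → Ω → E} {ψ Lψ : ι → E → ℝ} {Cm Am Lm : ℕ → Ω → Matrix ι ι ℝ}

theorem measurable_empiricalGenerator (hX : ∀ r, Measurable (X r))
    (hψ : ∀ k, Measurable (ψ k)) (hLψ : ∀ k, Measurable (Lψ k))
    (hCm : ∀ m ω k l, Cm m ω k l = (1 / m : ℝ) * ∑ r ∈ Finset.range m, ψ k (X r ω) * ψ l (X r ω))
    (hAm : ∀ m ω k l, Am m ω k l = (1 / m : ℝ) * ∑ r ∈ Finset.range m, ψ k (X r ω) * Lψ l (X r ω))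
    (hLm : ∀ m ω, Lm m ω = (Cm m ω)⁻¹ * Am m ω) (m : ℕ) :
    Measurable fun ω => (Cm m ω, Lm m ω) := by
  have hC := measurable_matrix_sampleMean hX (fun k l => (hψ k).mul (hψ l)) hCm m
  have hA := measurable_matrix_sampleMean hX (fun k l => (hψ k).mul (hLψ l)) hAm m
  simp_rw [hLm]
  exact hC.prodMk (hC.inv.mul hA)

theorem ae_tendsto_empiricalGenerator {P : Measure Ω} {μ : Measure E}
    (hX : ∀ r, Measurable (X r)) (hindep : iIndepFun X P) (hlaw : ∀ r, P.map (X r) = μ)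
    (hψ : ∀ k, Measurable (ψ k)) (hLψ : ∀ k, Measurable (Lψ k))
    (hψψ : ∀ k l, Integrable (fun y => ψ k y * ψ l y) μ)
    (hψLψ : ∀ k l, Integrable (fun y => ψ k y * Lψ l y) μ)
    (hCm : ∀ m ω k l, Cm m ω k l = (1 / m : ℝ) * ∑ r ∈ Finset.range m, ψ k (X r ω) * ψ l (X r ω))
    (hAm : ∀ m ω k l, Am m ω k l = (1 / m : ℝ) * ∑ r ∈ Finset.range m, ψ k (X r ω) * Lψ l (X r ω))
    (hLm : ∀ m ω, Lm m ω = (Cm m ω)⁻¹ * Am m ω) {C A : Matrix ι ι ℝ}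
    (hC : ∀ k l, C k l = ∫ y, ψ k y * ψ l y ∂μ) (hA : ∀ k l, A k l = ∫ y, ψ k y * Lψ l y ∂μ)
    (hCdet : IsUnit C.det) :
    ∀ᵐ ω ∂P, Tendsto (fun m => (Cm m ω, Lm m ω)) atTop (𝓝 (C, C⁻¹ * A)) := by
  filter_upwards [ae_tendsto_matrix_sampleMean hX hindep hlaw
      (fun k l => (hψ k).mul (hψ l)) hψψ hCm hC,
    ae_tendsto_matrix_sampleMean hX hindep hlaw (fun k l => (hψ k).mul (hLψ l)) hψLψ hAm hA]
    with ω hCω hAω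
  simp_rw [hLm]
  exact hCω.prodMk_nhds (hCω.matrix_inv_mul hAω hCdet)

end EmpiricalGenerator

theorem eDMD_trajectory_error_bound_general {d N nc : ℕ}
    (X : Set (EuclideanSpace ℝ (Fin d))) (hXcpt : IsCompact X)
    (hXpos : 0 < volume X)
    (μ : Measure (EuclideanSpace ℝ (Fin d)))
    (hμ : μ = (volume X)⁻¹ • volume.restrict X)
    (ψ : Fin N → EuclideanSpace ℝ (Fin d) → ℝ)
    (hψ : ∀ j, ContDiff ℝ 1 (ψ j))
    (C : Matrix (Fin N) (Fin N) ℝ)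
    (hC : ∀ k l, C k l = ∫ y, ψ k y * ψ l y ∂μ)
    (hCinv : IsUnit C.det)
    (f : EuclideanSpace ℝ (Fin d) → EuclideanSpace ℝ (Fin d)) (hf : Continuous f)
    (g : Fin nc → EuclideanSpace ℝ (Fin d) → EuclideanSpace ℝ (Fin d))
    (hg : ∀ i, Continuous (g i))
    (F : Fin (nc + 1) → EuclideanSpace ℝ (Fin d) → EuclideanSpace ℝ (Fin d))
    (hF0 : F 0 = f) (hFsucc : ∀ i : Fin nc, F i.succ = fun y => f y + g i y)
    (LF : Fin (nc + 1) → Fin N → EuclideanSpace ℝ (Fin d) → ℝ)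
    (hLF : ∀ i l y, LF i l y = fderiv ℝ (ψ l) y (F i y))
    (A : Fin (nc + 1) → Matrix (Fin N) (Fin N) ℝ)
    (hA : ∀ i k l, A i k l = ∫ y, ψ k y * LF i l y ∂μ)
    (LV : Fin (nc + 1) → Matrix (Fin N) (Fin N) ℝ)
    (hLV : ∀ i, LV i = C⁻¹ * A i)
    {Ω : Type*} [MeasurableSpace Ω] (P : Measure Ω) [IsProbabilityMeasure P]
    (Xs : Fin (nc + 1) → ℕ → Ω → EuclideanSpace ℝ (Fin d))
    (hXmeas : ∀ i r, Measurable (Xs i r))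
    (hXindep : ∀ i, iIndepFun (Xs i) P)
    (hXdist : ∀ i r, P.map (Xs i r) = μ)
    (Ct : Fin (nc + 1) → ℕ → Ω → Matrix (Fin N) (Fin N) ℝ)
    (hCt : ∀ i m ω k l,
      Ct i m ω k l = (1 / m : ℝ) * ∑ r ∈ Finset.range m, ψ k (Xs i r ω) * ψ l (Xs i r ω))
    (At : Fin (nc + 1) → ℕ → Ω → Matrix (Fin N) (Fin N) ℝ)
    (hAt : ∀ i m ω k l,
      At i m ω k l = (1 / m : ℝ) * ∑ r ∈ Finset.range m, ψ k (Xs i r ω) * LF i l (Xs i r ω))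
    (Lt : Fin (nc + 1) → ℕ → Ω → Matrix (Fin N) (Fin N) ℝ)
    (hLt : ∀ i m ω, Lt i m ω = (Ct i m ω)⁻¹ * At i m ω)
    (T : ℝ)
    (u : ℝ → Fin nc → ℝ) (hu : Measurable u)
    (hubdd : ∃ K : ℝ, ∀ᵐ t ∂(volume.restrict (Set.Icc (0 : ℝ) T)), ∀ i, |u t i| ≤ K)
    (LVu : ℝ → Matrix (Fin N) (Fin N) ℝ)
    (hLVu : ∀ t, LVu t = LV 0 + ∑ i : Fin nc, u t i • (LV i.succ - LV 0))
    (Ltu : ℕ → Ω → ℝ → Matrix (Fin N) (Fin N) ℝ)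
    (hLtu : ∀ m ω t,
      Ltu m ω t = Lt 0 m ω + ∑ i : Fin nc, u t i • (Lt i.succ m ω - Lt 0 m ω))
    (z0 : EuclideanSpace ℝ (Fin N))
    (ε δ : ℝ) (hε : 0 < ε) (hδ : δ ∈ Set.Ioo (0 : ℝ) 1) :
    ∃ m₀ : ℕ, ∀ m ≥ m₀,
      ∀ z : ℝ → EuclideanSpace ℝ (Fin N),
        ContinuousOn z (Set.Icc 0 T) →
        (∀ t ∈ Set.Icc (0 : ℝ) T,
          z t = z0 + ∫ s in (0 : ℝ)..t, Matrix.toEuclideanCLM (𝕜 := ℝ) (LVu s) (z s)) →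
      ∀ zt : Ω → ℝ → EuclideanSpace ℝ (Fin N),
        (∀ ω, (∀ i, IsUnit (Ct i m ω).det) →
          ContinuousOn (zt ω) (Set.Icc 0 T) ∧
          (∀ t ∈ Set.Icc (0 : ℝ) T,
            zt ω t = z0 +
              ∫ s in (0 : ℝ)..t, Matrix.toEuclideanCLM (𝕜 := ℝ) (Ltu m ω s) (zt ω s))) →
      ∀ t ∈ Set.Icc (0 : ℝ) T,
        1 - δ ≤ (P {ω | ‖z t - zt ω t‖ ≤ ε}).toReal := by
  have hψc : ∀ k, Continuous (ψ k) := fun k => (hψ k).continuous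
  have hFc : ∀ i, Continuous (F i) := Fin.cases (hF0 ▸ hf) fun i => hFsucc i ▸ hf.add (hg i)
  have hLFc : ∀ i l, Continuous (LF i l) := fun i l => funext (hLF i l) ▸
    ((hψ l).continuous_fderiv one_ne_zero).clm_apply (hFc i)
  have hint : ∀ φ : EuclideanSpace ℝ (Fin d) → ℝ, Continuous φ → Integrable φ μ := fun φ hφ =>
    hμ ▸ (hφ.continuousOn.integrableOn_compact hXcpt).smul_measure (ENNReal.inv_ne_top.2 hXpos.ne')
  have hYmeas : ∀ m, Measurable fun ω i => (Ct i m ω, Lt i m ω) := fun m =>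
    measurable_pi_lambda _ fun i => measurable_empiricalGenerator (hXmeas i)
      (fun k => (hψc k).measurable) (fun l => (hLFc i l).measurable) (hCt i) (hAt i) (hLt i) m
  have hYlim : ∀ᵐ ω ∂P, Tendsto (fun m i => (Ct i m ω, Lt i m ω)) atTop (𝓝 fun i => (C, LV i)) := by
    refine (ae_all_iff.2 fun i => ?_).mono fun ω hω => tendsto_pi_nhds.2 hω
    rw [hLV i]
    exact ae_tendsto_empiricalGenerator (hXmeas i) (hXindep i) (hXdist i)
      (fun k => (hψc k).measurable) (fun l => (hLFc i l).measurable)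
      (fun k l => hint _ ((hψc k).mul (hψc l))) (fun k l => hint _ ((hψc k).mul (hLFc i l)))
      (hCt i) (hAt i) (hLt i) hC (hA i) hCinv
  obtain ⟨η, hη, hstab⟩ := exists_pos_forall_norm_sub_le_of_controlledGenerator hε
    hu.aestronglyMeasurable hubdd (fun i => Matrix.toEuclideanCLM (𝕜 := ℝ) (LV i)) z0
  obtain ⟨m₀, hm₀⟩ := exists_forall_ge_one_sub_le_measureReal_preimage hYmeas hYlim
    (U := Set.pi univ fun i => {p | p.1.det ≠ 0 ∧
      ‖Matrix.toEuclideanCLM (𝕜 := ℝ) p.2 - Matrix.toEuclideanCLM (𝕜 := ℝ) (LV i)‖ < η})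
    (isOpen_set_pi finite_univ fun i _ =>
      (isOpen_ne_fun continuous_fst.matrix_det continuous_const).inter <| isOpen_lt
        ((Matrix.continuous_toEuclideanCLM.comp continuous_snd).sub continuous_const).norm
        continuous_const)
    (fun i _ => ⟨hCinv.ne_zero, by simpa using hη⟩) hδ.1
  refine ⟨m₀, fun m hm z hz hzeq zt hzt t ht => (hm₀ m hm).trans (measureReal_mono fun ω hω => ?_)⟩
  obtain ⟨hztc, hzteq⟩ := hzt ω fun i => isUnit_iff_ne_zero.2 (hω i trivial).1
  refine hstab (fun i => Matrix.toEuclideanCLM (𝕜 := ℝ) (Lt i m ω)) (fun i => (hω i trivial).2)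
    ?_ ?_ hz hzeq hztc hzteq t ht
  · intro s; rw [hLVu]; exact map_controlledGenerator Matrix.toEuclideanCLM LV (u s)
  · intro s; rw [hLtu]; exact map_controlledGenerator Matrix.toEuclideanCLM (Lt · m ω) (u s)

/-- finite-data probabilistic error bound on the trajectories of
observables propagated by the projected bilinear generator `L_V^u` versus its
purely data-driven eDMD estimate `L̃_m^u`: for every `ε > 0`, `δ ∈ (0,1)`, horizon
`T > 0`, initial coefficient vector `z⁰` and measurable essentially bounded control
`u`, there is `m₀` such that for all `m ≥ m₀` and each `t ∈ [0,T]`,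
`ℙ(‖z(t) − z̃(t,·)‖₂ ≤ ε) ≥ 1 − δ`. -/
theorem eDMD_trajectory_error_bound {d N nc : ℕ}
    (X : Set (EuclideanSpace ℝ (Fin d))) (hXcpt : IsCompact X)
    (hXpos : 0 < volume X)
    (μ : Measure (EuclideanSpace ℝ (Fin d)))
    (hμ : μ = (volume X)⁻¹ • volume.restrict X)
    (ψ : Fin N → EuclideanSpace ℝ (Fin d) → ℝ)
    (hψ : ∀ j, ContDiff ℝ 1 (ψ j))
    (C : Matrix (Fin N) (Fin N) ℝ)
    (hC : ∀ k l, C k l = ∫ y, ψ k y * ψ l y ∂μ)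
    (hCinv : IsUnit C.det)
    (f : EuclideanSpace ℝ (Fin d) → EuclideanSpace ℝ (Fin d)) (hf : Continuous f)
    (g : Fin nc → EuclideanSpace ℝ (Fin d) → EuclideanSpace ℝ (Fin d))
    (hg : ∀ i, Continuous (g i))
    (F : Fin (nc + 1) → EuclideanSpace ℝ (Fin d) → EuclideanSpace ℝ (Fin d))
    (hF0 : F 0 = f) (hFsucc : ∀ i : Fin nc, F i.succ = fun y => f y + g i y)
    (LF : Fin (nc + 1) → Fin N → EuclideanSpace ℝ (Fin d) → ℝ)
    (hLF : ∀ i l y, LF i l y = fderiv ℝ (ψ l) y (F i y))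
    (A : Fin (nc + 1) → Matrix (Fin N) (Fin N) ℝ)
    (hA : ∀ i k l, A i k l = ∫ y, ψ k y * LF i l y ∂μ)
    (LV : Fin (nc + 1) → Matrix (Fin N) (Fin N) ℝ)
    (hLV : ∀ i, LV i = C⁻¹ * A i)
    {Ω : Type*} [MeasurableSpace Ω] (P : Measure Ω) [IsProbabilityMeasure P]
    (Xs : Fin (nc + 1) → ℕ → Ω → EuclideanSpace ℝ (Fin d))
    (hXmeas : ∀ i r, Measurable (Xs i r))
    (hXindep : ∀ i, iIndepFun (Xs i) P)
    (hXdist : ∀ i r, P.map (Xs i r) = μ)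
    (Ct : Fin (nc + 1) → ℕ → Ω → Matrix (Fin N) (Fin N) ℝ)
    (hCt : ∀ i m ω k l,
      Ct i m ω k l = (1 / m : ℝ) * ∑ r ∈ Finset.range m, ψ k (Xs i r ω) * ψ l (Xs i r ω))
    (At : Fin (nc + 1) → ℕ → Ω → Matrix (Fin N) (Fin N) ℝ)
    (hAt : ∀ i m ω k l,
      At i m ω k l = (1 / m : ℝ) * ∑ r ∈ Finset.range m, ψ k (Xs i r ω) * LF i l (Xs i r ω))
    (Lt : Fin (nc + 1) → ℕ → Ω → Matrix (Fin N) (Fin N) ℝ)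
    (hLt : ∀ i m ω, Lt i m ω = (Ct i m ω)⁻¹ * At i m ω)
    (T : ℝ) (hT : 0 < T)
    (u : ℝ → Fin nc → ℝ) (hu : Measurable u)
    (hubdd : ∃ K : ℝ, ∀ᵐ t ∂(volume.restrict (Set.Icc (0 : ℝ) T)), ∀ i, |u t i| ≤ K)
    (LVu : ℝ → Matrix (Fin N) (Fin N) ℝ)
    (hLVu : ∀ t, LVu t = LV 0 + ∑ i : Fin nc, u t i • (LV i.succ - LV 0))
    (Ltu : ℕ → Ω → ℝ → Matrix (Fin N) (Fin N) ℝ)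
    (hLtu : ∀ m ω t,
      Ltu m ω t = Lt 0 m ω + ∑ i : Fin nc, u t i • (Lt i.succ m ω - Lt 0 m ω))
    (z0 : EuclideanSpace ℝ (Fin N))
    (ε δ : ℝ) (hε : 0 < ε) (hδ : δ ∈ Set.Ioo (0 : ℝ) 1) :
    ∃ m₀ : ℕ, ∀ m ≥ m₀,
      ∀ z : ℝ → EuclideanSpace ℝ (Fin N),
        ContinuousOn z (Set.Icc 0 T) →
        (∀ t ∈ Set.Icc (0 : ℝ) T,
          z t = z0 + ∫ s in (0 : ℝ)..t, Matrix.toEuclideanCLM (𝕜 := ℝ) (LVu s) (z s)) →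
      ∀ zt : Ω → ℝ → EuclideanSpace ℝ (Fin N),
        (∀ ω, (∀ i, IsUnit (Ct i m ω).det) →
          ContinuousOn (zt ω) (Set.Icc 0 T) ∧
          (∀ t ∈ Set.Icc (0 : ℝ) T,
            zt ω t = z0 +
              ∫ s in (0 : ℝ)..t, Matrix.toEuclideanCLM (𝕜 := ℝ) (Ltu m ω s) (zt ω s))) →
      ∀ t ∈ Set.Icc (0 : ℝ) T,
        1 - δ ≤ (P {ω | ‖z t - zt ω t‖ ≤ ε}).toReal :=
  eDMD_trajectory_error_bound_general X hXcpt hXpos μ hμ ψ hψ C hC hCinv f hf g hg F hF0 hFsucc LF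
    hLF A hA LV hLV P Xs hXmeas hXindep hXdist Ct hCt At hAt Lt hLt T u hu hubdd LVu hLVu Ltu hLtu
    z0 ε δ hε hδ
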